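/- Let L ⊂ ℝ² be a convex body with the origin o on its boundary and L ⊂ {x : x₂ ≥ 0}. For small ε > 0 let p_l(ε) and p_r(ε) be the two intersection points of the line {x₂ = ε} with ∂L (with p_l to the left of p_r), and let θ₁(ε), θ₂(ε) ∈ [0, π/2) be the suprema of the acute angles formed with the x₁-axis by supporting lines of L at p_l(ε) and at p_r(ε), respectively. Then (θ₁(ε) + θ₂(ε))/ε → ∞ as ε → 0⁺. -/

import Mathlib

open Metric Set Filter
open scoped RealInnerProductSpace

noncomputable section

abbrev E2 := EuclideanSpace ℝ (Fin 2)

def IsConvexBody2 (L : Set E2) : Prop :=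
  Convex ℝ L ∧ IsCompact L ∧ (interior L).Nonempty

def outerNormalAt2 (L : Set E2) (p ν : E2) : Prop :=
  ‖ν‖ = 1 ∧ ∀ z ∈ L, ⟪ν, z - p⟫ ≤ (0:ℝ)

/-- The supremum of the acute angles made with the `x₁`-axis by supporting lines of `L`
at a boundary point `p`.  A supporting line with outer unit normal `ν` makes the acute
angle `arcsin |ν₁|` with the `x₁`-axis. -/
def supAngle (L : Set E2) (p : E2) : ℝ :=
  sSup {a | ∃ ν : E2, outerNormalAt2 L p ν ∧ a = Real.arcsin |ν 0|}

/-! Suppose the angle sum at height `ε` stays below `C ε` along heights `ε → 0`. At such a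
height the right boundary point `p = pr ε` has an outer unit normal `ν` with `|ν 0| < C ε`;
comparing with an interior ball above height `ε` forces `ν 1 ≤ -1/2`, and comparing with the
interior point of the segment from `0` at height `ε` forces `ν 0 > 0`. Testing `ν` against
`pr η` for `η ≤ ε / 2` then gives `ε / 4 ≤ ν 0 * (p 0 - (pr η) 0)`, so the right boundary moves
left by at least `1 / (4 C)` every time one passes to a smaller bad height below `ε / 2`.
Infinitely many such moves contradict the boundedness of `L`. -/

open Topology

section InnerProductSpace

variable {F : Type*} [NormedAddCommGroup F] [InnerProductSpace ℝ F] {s : Set F} {p ν : F}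

theorem exists_unit_inner_sub_nonpos_of_notMem_interior [CompleteSpace F] (hs : Convex ℝ s)
    (hint : (interior s).Nonempty) (hp : p ∉ interior s) :
    ∃ ν : F, ‖ν‖ = 1 ∧ ∀ z ∈ s, ⟪ν, z - p⟫ ≤ 0 := by
  obtain ⟨f, hf⟩ := geometric_hahn_banach_open_point hs.interior isOpen_interior hp
  have hle : ∀ z ∈ s, f z ≤ f p := by
    have : closure (interior s) ⊆ {z | f z ≤ f p} :=
      closure_minimal (fun z hz => (hf z hz).le) (isClosed_le f.continuous continuous_const)
    rw [hs.closure_interior_eq_closure_of_nonempty_interior hint] at this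
    exact fun z hz => this (subset_closure hz)
  set v := (InnerProductSpace.toDual ℝ F).symm f
  have hv : ∀ x, ⟪v, x⟫ = f x := fun x => InnerProductSpace.toDual_symm_apply
  have hv0 : v ≠ 0 := by
    rintro h
    obtain ⟨w, hw⟩ := hint
    simpa [← hv, h] using hf w hw
  refine ⟨‖v‖⁻¹ • v, by simp [norm_smul, hv0], fun z hz => ?_⟩
  rw [real_inner_smul_left, inner_sub_right, hv, hv]
  exact mul_nonpos_of_nonneg_of_nonpos (by positivity) (sub_nonpos.2 (hle z hz))

theorem inner_sub_le_neg_of_closedBall_subset (hν : ‖ν‖ = 1) (hs : ∀ y ∈ s, ⟪ν, y - p⟫ ≤ 0)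
    {z : F} {r : ℝ} (hr : 0 ≤ r) (hball : closedBall z r ⊆ s) : ⟪ν, z - p⟫ ≤ -r := by
  have hmem : z + r • ν ∈ s := hball (by simp [norm_smul, hν, abs_of_nonneg hr])
  have := hs _ hmem
  rw [show z + r • ν - p = (z - p) + r • ν by abel, inner_add_right, real_inner_smul_right,
    real_inner_self_eq_norm_sq, hν] at this
  linarith

theorem inner_sub_neg_of_mem_interior (hν : ‖ν‖ = 1) (hs : ∀ y ∈ s, ⟪ν, y - p⟫ ≤ 0)
    {z : F} (hz : z ∈ interior s) : ⟪ν, z - p⟫ < 0 := by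
  obtain ⟨r, hr, hball⟩ := Metric.nhds_basis_closedBall.mem_iff.1 (mem_interior_iff_mem_nhds.1 hz)
  linarith [inner_sub_le_neg_of_closedBall_subset hν hs hr.le hball]

end InnerProductSpace

theorem Bornology.IsBounded.exists_nonneg_add_smul_mem_frontier {F : Type*}
    [NormedAddCommGroup F] [NormedSpace ℝ F] {s : Set F} (hs : Bornology.IsBounded s) {z v : F}
    (hz : z ∈ s) (hv : v ≠ 0) : ∃ t : ℝ, 0 ≤ t ∧ z + t • v ∈ frontier s := by
  have := Subtype.preconnectedSpace (isPreconnected_Ici (a := (0:ℝ)))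
  set φ : Ici (0:ℝ) → F := fun t => z + (t : ℝ) • v
  have hφ : Continuous φ := by fun_prop
  obtain ⟨R, hR0, hR⟩ := hs.exists_pos_norm_le
  have hout : φ ⁻¹' s ≠ univ := by
    set t : ℝ := (R + ‖z‖ + 1) / ‖v‖
    have ht : 0 ≤ t := by positivity
    intro h
    have hnorm := hR (φ ⟨t, ht⟩) (show ⟨t, ht⟩ ∈ φ ⁻¹' s by rw [h]; trivial)
    have : ‖t • v‖ ≤ ‖φ ⟨t, ht⟩‖ + ‖z‖ := by
      simpa [φ] using norm_sub_le (z + t • v) z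
    rw [norm_smul, Real.norm_of_nonneg ht, div_mul_cancel₀ _ (norm_ne_zero_iff.2 hv)] at this
    linarith
  obtain ⟨t, ht⟩ := nonempty_frontier_iff.2 ⟨⟨⟨0, self_mem_Ici⟩, by simpa [φ] using hz⟩, hout⟩
  exact ⟨t, t.2, hφ.frontier_preimage_subset s ht⟩

namespace E2

theorem inner_eq (u v : E2) : ⟪u, v⟫ = u 0 * v 0 + u 1 * v 1 := by
  simp [PiLp.inner_apply, Fin.sum_univ_two, mul_comm]

theorem sq_add_sq_of_norm_eq_one {ν : E2} (hν : ‖ν‖ = 1) : ν 0 ^ 2 + ν 1 ^ 2 = 1 := by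
  simpa [Fin.sum_univ_two, hν] using (EuclideanSpace.real_norm_sq_eq ν).symm

theorem abs_apply_le_norm (x : E2) (i : Fin 2) : |x i| ≤ ‖x‖ :=
  PiLp.norm_apply_le x i

theorem le_apply_one_of_closedBall_subset {w : E2} {r : ℝ} (hr : 0 ≤ r)
    (h : closedBall w r ⊆ {x : E2 | 0 ≤ x 1}) : r ≤ w 1 := by
  have := h (show w - r • EuclideanSpace.single 1 1 ∈ closedBall w r by
    simp [norm_smul, abs_of_nonneg hr])
  simp only [Fin.isValue, mem_ofPred_eq, PiLp.sub_apply, PiLp.smul_apply, PiLp.single_eq_same,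
    smul_eq_mul, mul_one, sub_nonneg] at this
  exact this

end E2

theorem le_of_forall_mem_frontier_of_isBounded {L : Set E2} (hL : Bornology.IsBounded L)
    {c a : ℝ} (h : ∀ x ∈ frontier L, x 1 = c → x 0 ≤ a) {z : E2} (hz : z ∈ L) (hz1 : z 1 = c) :
    z 0 ≤ a := by
  obtain ⟨t, ht, hfr⟩ := hL.exists_nonneg_add_smul_mem_frontier hz
    (v := EuclideanSpace.single 0 1) (by simp)
  have := h _ hfr (by simpa using hz1)
  simp only [Fin.isValue, PiLp.add_apply, PiLp.smul_apply, PiLp.single_eq_same, smul_eq_mul,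
    mul_one] at this
  linarith

theorem supAngle_nonneg (L : Set E2) (p : E2) : 0 ≤ supAngle L p :=
  Real.sSup_nonneg fun _ ⟨_, _, ha⟩ => ha ▸ Real.arcsin_nonneg.2 (abs_nonneg _)

theorem outerNormalAt2.abs_le_supAngle {L : Set E2} {p ν : E2} (hν : outerNormalAt2 L p ν) :
    |ν 0| ≤ supAngle L p := by
  have hbdd : BddAbove {a | ∃ ν : E2, outerNormalAt2 L p ν ∧ a = Real.arcsin |ν 0|} :=
    ⟨Real.pi / 2, fun _ ⟨_, _, ha⟩ => ha ▸ Real.arcsin_le_pi_div_two _⟩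
  have hν1 : |ν 0| ≤ 1 := (E2.abs_apply_le_norm ν 0).trans hν.1.le
  calc |ν 0| = Real.sin (Real.arcsin |ν 0|) :=
        (Real.sin_arcsin (by linarith [abs_nonneg (ν 0)]) hν1).symm
    _ ≤ Real.arcsin |ν 0| := Real.sin_le (Real.arcsin_nonneg.2 (abs_nonneg _))
    _ ≤ supAngle L p := le_csSup hbdd ⟨ν, hν, rfl⟩

namespace outerNormalAt2

variable {L : Set E2} {p ν : E2}

theorem coord_zero_pos (hν : outerNormalAt2 L p ν) {z : E2} (hz : z ∈ interior L)
    (hz1 : z 1 = p 1) (hz0 : z 0 ≤ p 0) : 0 < ν 0 := by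
  have h := inner_sub_neg_of_mem_interior hν.1 hν.2 hz
  rw [E2.inner_eq] at h
  simp only [PiLp.sub_apply, hz1, sub_self, mul_zero, add_zero] at h
  nlinarith

theorem coord_one_le (hν : outerNormalAt2 L p ν) {w : E2} {r : ℝ} (hball : closedBall w r ⊆ L)
    (hpw : p 1 < w 1) (hν0 : |ν 0| ≤ 1 / 2) (hν0w : |ν 0| * |w 0 - p 0| ≤ r) :
    ν 1 ≤ -1 / 2 := by
  have h := inner_sub_le_neg_of_closedBall_subset hν.1 hν.2
    ((mul_nonneg (abs_nonneg _) (abs_nonneg _)).trans hν0w) hball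
  rw [E2.inner_eq] at h
  simp only [PiLp.sub_apply] at h
  have hnonpos : ν 1 ≤ 0 := by
    have : -r ≤ ν 0 * (w 0 - p 0) := by
      rw [← abs_mul] at hν0w
      linarith [neg_abs_le (ν 0 * (w 0 - p 0))]
    nlinarith
  nlinarith [E2.sq_add_sq_of_norm_eq_one hν.1, sq_abs (ν 0), abs_nonneg (ν 0)]

theorem div_four_le_mul_sub (hν : outerNormalAt2 L p ν) (hν1 : ν 1 ≤ -1 / 2) (hp1 : 0 ≤ p 1)
    {q : E2} (hq : q ∈ L) (hq1 : q 1 ≤ p 1 / 2) : p 1 / 4 ≤ ν 0 * (p 0 - q 0) := by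
  have h := hν.2 q hq
  rw [E2.inner_eq] at h
  simp only [PiLp.sub_apply] at h
  nlinarith

end outerNormalAt2

theorem div_four_le_mul_sub_of_supAngle_le {L : Set E2} (hconv : Convex ℝ L) (h0 : 0 ∈ L)
    {w : E2} {r D θ : ℝ} (hr : 0 < r) (hball : closedBall w r ⊆ L) (hD : ∀ x ∈ L, |x 0| ≤ D)
    {p q : E2} (hpL : p ∈ L) (hp : p ∉ interior L) (hmax : ∀ z ∈ L, z 1 = p 1 → z 0 ≤ p 0)
    (hp1 : 0 < p 1) (hpw : p 1 < w 1) (hθ : supAngle L p ≤ θ) (hθ1 : θ ≤ 1 / 2)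
    (hθD : θ * (2 * D) ≤ r) (hq : q ∈ L) (hq1 : q 1 ≤ p 1 / 2) :
    p 1 / 4 ≤ θ * (p 0 - q 0) := by
  have hw : w ∈ interior L :=
    interior_mono hball (ball_subset_interior_closedBall (mem_ball_self hr))
  obtain ⟨ν, hν⟩ := exists_unit_inner_sub_nonpos_of_notMem_interior hconv ⟨w, hw⟩ hp
  replace hν : outerNormalAt2 L p ν := hν
  have hνθ : |ν 0| ≤ θ := hν.abs_le_supAngle.trans hθ
  set t := p 1 / w 1
  have hz : t • w ∈ interior L := by
    have ht : 0 < t := div_pos hp1 (hp1.trans hpw)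
    have ht1 : t ≤ 1 := (div_le_one (hp1.trans hpw)).2 hpw.le
    simpa using hconv.combo_interior_self_mem_interior hw h0 ht (sub_nonneg.2 ht1) (by ring)
  have hz1 : (t • w) 1 = p 1 := by
    simp only [PiLp.smul_apply, smul_eq_mul, t]
    exact div_mul_cancel₀ _ (hp1.trans hpw).ne'
  have hν0 : 0 < ν 0 := hν.coord_zero_pos hz hz1 (hmax _ (interior_subset hz) hz1)
  have hwp : |w 0 - p 0| ≤ 2 * D := by
    have := hD w (interior_subset hw)
    have := hD p hpL
    rw [abs_le] at *
    constructor <;> linarith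
  have hν1 : ν 1 ≤ -1 / 2 := hν.coord_one_le hball hpw (hνθ.trans hθ1)
    ((mul_le_mul hνθ hwp (abs_nonneg _) ((abs_nonneg _).trans hνθ)).trans hθD)
  have key := hν.div_four_le_mul_sub hν1 hp1.le hq hq1
  have hpq : 0 < p 0 - q 0 := pos_of_mul_pos_right (by linarith) hν0.le
  calc p 1 / 4 ≤ ν 0 * (p 0 - q 0) := key
    _ ≤ θ * (p 0 - q 0) := mul_le_mul_of_nonneg_right ((le_abs_self _).trans hνθ) hpq.le

theorem not_bddBelow_of_forall_le_sub {S : Set ℝ} {f : ℝ → ℝ} {d : ℝ} (hd : 0 < d)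
    (hS : ∀ a > 0, ∃ ε ∈ S, 0 < ε ∧ ε < a)
    (hdrop : ∀ ε ∈ S, ∀ η ∈ S, η < ε / 2 → f η ≤ f ε - d) : ¬ BddBelow (f '' S) := by
  rintro ⟨m, hm⟩
  obtain ⟨ε₁, hε₁S, hε₁, -⟩ := hS 1 one_pos
  have hiter : ∀ n : ℕ, ∃ ε ∈ S, 0 < ε ∧ f ε ≤ f ε₁ - n * d := by
    intro n
    induction n with
    | zero => exact ⟨ε₁, hε₁S, hε₁, by simp⟩
    | succ n ih =>
      obtain ⟨ε, hεS, hε, hfε⟩ := ih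
      obtain ⟨η, hηS, hη, hηε⟩ := hS (ε / 2) (half_pos hε)
      refine ⟨η, hηS, hη, ?_⟩
      push_cast
      linarith [hdrop ε hεS η hηS hηε]
  obtain ⟨n, hn⟩ := exists_nat_gt ((f ε₁ - m) / d)
  obtain ⟨ε, hεS, -, hfε⟩ := hiter n
  rw [div_lt_iff₀ hd] at hn
  linarith [hm (mem_image_of_mem f hεS)]

theorem tendsto_div_atTop_of_le_mul_sub {f g : ℝ → ℝ} {δ κ c : ℝ} (hδ : 0 < δ) (hκ : 0 < κ)
    (hc : 0 < c) (hf : BddBelow (f '' Ioo 0 δ)) (hg : ∀ ε ∈ Ioo 0 δ, 0 ≤ g ε)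
    (h : ∀ ε ∈ Ioo 0 δ, g ε < κ → ∀ η ∈ Ioo 0 (ε / 2), c * ε ≤ g ε * (f ε - f η)) :
    Tendsto (fun ε => g ε / ε) (𝓝[>] 0) atTop := by
  refine tendsto_atTop.2 fun b => ?_
  by_contra hb
  rw [not_eventually] at hb
  set C := max b 1
  have hC : 0 < C := lt_max_of_lt_right one_pos
  set δ' := min δ (κ / C)
  have hδ' : 0 < δ' := lt_min hδ (div_pos hκ hC)
  set S := {ε | ε ∈ Ioo 0 δ' ∧ g ε < C * ε}
  have hS : S ⊆ Ioo 0 δ := fun ε hε => ⟨hε.1.1, hε.1.2.trans_le (min_le_left _ _)⟩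
  refine not_bddBelow_of_forall_le_sub (f := f) (div_pos hc hC) ?_ ?_ (hf.mono (image_mono hS))
  · intro a ha
    obtain ⟨ε, hbε, hε, hεa⟩ := (hb.and_eventually (Ioo_mem_nhdsGT (lt_min ha hδ'))).exists
    rw [not_le, div_lt_iff₀ hε] at hbε
    refine ⟨ε, ⟨⟨hε, hεa.trans_le (min_le_right _ _)⟩, ?_⟩, hε, hεa.trans_le (min_le_left _ _)⟩
    nlinarith [le_max_left b 1]
  · rintro ε ⟨hε, hgε⟩ η ⟨hη, -⟩ hηε
    have hεδ : ε ∈ Ioo 0 δ := hS ⟨hε, hgε⟩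
    have hgκ : g ε < κ := by
      have : C * ε < κ := (lt_div_iff₀' hC).1 (hε.2.trans_le (min_le_right _ _))
      linarith
    have hdrop := h ε hεδ hgκ η ⟨hη.1, hηε⟩
    have hpos : 0 < f ε - f η := by
      by_contra! hneg
      nlinarith [hg ε hεδ, hε.1]
    rw [le_sub_comm, div_le_iff₀ hC]
    nlinarith [hε.1]

theorem stmt11 (L : Set E2) (hL : IsConvexBody2 L)
    (h0 : (0:E2) ∈ frontier L) (hpos : L ⊆ {x : E2 | 0 ≤ x 1})
    (ε' : ℝ) (hε' : 0 < ε') (pl pr : ℝ → E2)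
    (hmem : ∀ ε ∈ Set.Ioo (0:ℝ) ε',
      pl ε ∈ frontier L ∧ pr ε ∈ frontier L ∧
      (pl ε) 1 = ε ∧ (pr ε) 1 = ε ∧
      ∀ x ∈ frontier L, x 1 = ε → (pl ε) 0 ≤ x 0 ∧ x 0 ≤ (pr ε) 0) :
    Filter.Tendsto (fun ε => (supAngle L (pl ε) + supAngle L (pr ε)) / ε)
      (nhdsWithin 0 (Set.Ioi 0)) Filter.atTop := by
  obtain ⟨hconv, hcomp, w, hw⟩ := hL
  have hfr : frontier L ⊆ L := hcomp.isClosed.frontier_subset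
  obtain ⟨r, hr, hball⟩ := Metric.nhds_basis_closedBall.mem_iff.1 (mem_interior_iff_mem_nhds.1 hw)
  have hrw : r ≤ w 1 := E2.le_apply_one_of_closedBall_subset hr.le (hball.trans hpos)
  obtain ⟨R, hR, hRL⟩ := hcomp.isBounded.exists_pos_norm_le
  have hD : ∀ x ∈ L, |x 0| ≤ R := fun x hx => (E2.abs_apply_le_norm x 0).trans (hRL x hx)
  have hmem' : ∀ ε ∈ Ioo 0 (min ε' r), _ := fun ε hε =>
    hmem ε ⟨hε.1, hε.2.trans_le (min_le_left _ _)⟩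
  refine tendsto_div_atTop_of_le_mul_sub (f := fun ε => pr ε 0) (lt_min hε' hr)
    (show 0 < min (1 / 2) (r / (2 * R)) by positivity) (show (0:ℝ) < 1 / 4 by norm_num)
    ⟨-R, ?_⟩ (fun ε _ => add_nonneg (supAngle_nonneg _ _) (supAngle_nonneg _ _)) ?_
  · rintro _ ⟨ε, hε, rfl⟩
    exact neg_le_of_abs_le (hD _ (hfr (hmem' ε hε).2.1))
  · rintro ε hε hgκ η ⟨hη, hηε⟩
    obtain ⟨-, hprf, -, hpr1, hprmax⟩ := hmem' ε hε
    obtain ⟨-, hqf, -, hq1, -⟩ := hmem' η ⟨hη, by linarith [hε.2]⟩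
    have hmax : ∀ z ∈ L, z 1 = pr ε 1 → z 0 ≤ pr ε 0 := fun z hz hz1 =>
      le_of_forall_mem_frontier_of_isBounded hcomp.isBounded (fun x hx hx1 => (hprmax x hx hx1).2)
        hz (hz1.trans hpr1)
    have := div_four_le_mul_sub_of_supAngle_le hconv (hfr h0) hr hball hD (hfr hprf) hprf.2 hmax
      (by rw [hpr1]; exact hε.1) (by linarith [hε.2, min_le_right ε' r])
      (le_add_of_nonneg_left (supAngle_nonneg _ _)) (hgκ.le.trans (min_le_left _ _))
      ((le_div_iff₀ (by positivity)).1 (hgκ.le.trans (min_le_right _ _))) (hfr hqf)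
      (by linarith)
    rw [hpr1] at this
    linarith
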